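/- Let N₁ and m be positive integers with 2m ≤ N₁. Sample θ uniformly from {0,1}^{N₁}; on the event that m ≤ w_H(θ) ≤ N₁ − m, sample I₀ uniformly among m-element subsets of the zero-positions of θ and I₁ uniformly among m-element subsets of the one-positions of θ (independently given θ); independently of all of these, sample a uniform bit c ∈ {0,1}; and define the ordered pair (J₀, J₁) = (I_c, I_{1−c}). Then for every pair (A₀, A₁) of disjoint m-element subsets of {1,…,N₁}, P(c = 0 and (J₀,J₁) = (A₀,A₁)) = P(c = 1 and (J₀,J₁) = (A₀,A₁)); consequently, conditioned on the non-abort event m ≤ w_H(θ) ≤ N₁ − m, the bit c is independent of the ordered pair (J₀, J₁) and remains uniformly distributed. -/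
import Mathlib


open Finset

/-- Hamming weight of a binary string `θ : Fin N → Bool`. -/
def hammingWeight {N : ℕ} (θ : Fin N → Bool) : ℕ :=
  (Finset.univ.filter fun i => θ i = true).card

/-- The joint probability `P(c = c₀ ∧ (J₀, J₁) = (A₀, A₁))` in the string-separation
sampling: `θ` is uniform on `{0,1}^{N₁}`; on the event `m ≤ w_H(θ) ≤ N₁ − m`, `I₀`
is a uniform `m`-element subset of the zero-positions of `θ` and `I₁` a uniform
`m`-element subset of the one-positions of `θ` (independently given `θ`); the bit
`c` is uniform and independent of everything else; and `(J₀, J₁) = (I_c, I_{1−c})`.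
Thus for `c₀ = 0` the event requires `I₀ = A₀ ⊆ Z(θ)` and `I₁ = A₁ ⊆ O(θ)`, while
for `c₀ = 1` it requires `I₁ = A₀ ⊆ O(θ)` and `I₀ = A₁ ⊆ Z(θ)`; in each case the
conditional probability given a compatible `θ` is
`1 / (C(N₁ − w_H θ, m) · C(w_H θ, m))`. -/
noncomputable def sepChoiceJointProb (N₁ m : ℕ) (c₀ : Bool) (A₀ A₁ : Finset (Fin N₁)) : ℝ :=
  (1 / 2) * ((2 : ℝ) ^ N₁)⁻¹ *
    ∑ θ : Fin N₁ → Bool,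
      (if m ≤ hammingWeight θ ∧ hammingWeight θ ≤ N₁ - m ∧
          (∀ i ∈ (if c₀ then A₁ else A₀), θ i = false) ∧
          (∀ j ∈ (if c₀ then A₀ else A₁), θ j = true)
        then (((N₁ - hammingWeight θ).choose m * (hammingWeight θ).choose m : ℕ) : ℝ)⁻¹
        else 0)

/-- Lemma 4.2 (classical content): the string-separation message `(J₀, J₁) = (I_c, I_{\bar c})`
carries no information about the receiver's choice bit `c`:
`P(c = 0 ∧ (J₀,J₁) = (A₀,A₁)) = P(c = 1 ∧ (J₀,J₁) = (A₀,A₁))` for every pair of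
disjoint `m`-element subsets `(A₀, A₁)`.  Consequently, conditioned on the
non-abort event, `c` is independent of `(J₀, J₁)` and remains uniform:
`P(c = 0 ∧ (J₀,J₁) = (A₀,A₁))` is half of `P((J₀,J₁) = (A₀,A₁))`. -/
theorem sep_hides_choice_bit (N₁ m : ℕ) (hN : 0 < N₁) (hm : 0 < m) (h2m : 2 * m ≤ N₁)
    (A₀ A₁ : Finset (Fin N₁)) (hdisj : Disjoint A₀ A₁)
    (hA₀ : A₀.card = m) (hA₁ : A₁.card = m) :
    sepChoiceJointProb N₁ m false A₀ A₁ = sepChoiceJointProb N₁ m true A₀ A₁ ∧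
    sepChoiceJointProb N₁ m false A₀ A₁
      = (1 / 2) * (sepChoiceJointProb N₁ m false A₀ A₁
          + sepChoiceJointProb N₁ m true A₀ A₁) := by
  have hwle : ∀ θ : Fin N₁ → Bool, hammingWeight θ ≤ N₁ := by
    intro θ
    simpa [hammingWeight] using (Finset.card_filter_le Finset.univ fun i => θ i = true)
  have hwnot : ∀ θ : Fin N₁ → Bool,
      hammingWeight (fun i => !θ i) = N₁ - hammingWeight θ := by
    intro θ
    have : (Finset.univ.filter fun i => (!θ i) = true)
        = (Finset.univ.filter fun i => θ i = true)ᶜ := by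
      ext i; simp
    simp only [hammingWeight, this, Finset.card_compl, Fintype.card_fin]
  have key : sepChoiceJointProb N₁ m false A₀ A₁ = sepChoiceJointProb N₁ m true A₀ A₁ := by
    unfold sepChoiceJointProb
    congr 1
    apply Fintype.sum_bijective (fun (θ : Fin N₁ → Bool) i => !θ i)
      (Function.Involutive.bijective (fun θ => by funext i; simp))
    intro θ
    have hle := hwle θ
    rw [hwnot θ]
    simp only [Bool.false_eq_true, if_false, if_true]
    have harith : N₁ - (N₁ - hammingWeight θ) = hammingWeight θ := by omega
    rw [harith]
    apply if_congr
    · constructor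
      · rintro ⟨h1, h2, h3, h4⟩
        refine ⟨by omega, by omega, fun i hi => by simpa using h4 i hi,
          fun j hj => by simpa using h3 j hj⟩
      · rintro ⟨h1, h2, h3, h4⟩
        refine ⟨by omega, by omega, fun i hi => ?_, fun j hj => ?_⟩
        · have := h4 i hi; simpa using this
        · have := h3 j hj; simpa using this
    · rw [Nat.mul_comm]
    · rfl
  exact ⟨key, by rw [key]; ring⟩
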